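/- arXiv:1303.7332 — 4 statements merged into one kernel-verified Lean document; each statement's English description precedes it below -/
import Mathlib

section
/- Transitivity of algorithmic subtyping in pure System F<:: for every type environment Γ and types S, Q, T, if Γ ⊢ S <: Q and Γ ⊢ Q <: T are derivable in the algorithmic subtyping system, then Γ ⊢ S <: T is derivable. -/
/-- Types of pure System F<:, with named type variables drawn from ℕ.
`all X S T` is `∀X<:S.T`, binding `X` in `T` but not in `S`. -/
inductive Tp : Type
  | var : ℕ → Tp
  | top : Tp
  | arr : Tp → Tp → Tp
  | all : ℕ → Tp → Tp → Tp
  deriving DecidableEq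

/-- Free type variables of a type. -/
def Tp.fv : Tp → Finset ℕ
  | .var x => {x}
  | .top => ∅
  | .arr s t => s.fv ∪ t.fv
  | .all x s t => s.fv ∪ (t.fv.erase x)

/-- Capture-avoiding simultaneous renaming of the free variables of a type
along `σ`; bound variables are renamed where necessary to avoid capture. -/
def Tp.ren (σ : ℕ → ℕ) : Tp → Tp
  | .var x => .var (σ x)
  | .top => .top
  | .arr s t => .arr (s.ren σ) (t.ren σ)
  | .all x s t =>
      let bad : Finset ℕ := (t.fv.erase x).image σ
      let x' : ℕ := if x ∈ bad then bad.sup id + 1 else x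
      .all x' (s.ren σ) (t.ren (Function.update σ x x'))

/-- Capture-avoiding renaming of every free occurrence of `y` by `z`. -/
def Tp.renVar (y z : ℕ) (t : Tp) : Tp := t.ren (Function.update id y z)

/-- Type environments: finite lists of pairs ⟨variable, type⟩
(the head of the list is the most recently introduced binding). -/
abbrev TpEnv := List (ℕ × Tp)

/-- The domain of an environment: the set of its variables. -/
def envDom (Γ : TpEnv) : Finset ℕ := (Γ.map Prod.fst).toFinset

/-- `Closed T Γ`: every free variable of `T` is bound to some type in `Γ`. -/
def Closed (T : Tp) (Γ : TpEnv) : Prop := ∀ Y ∈ T.fv, ∃ U, (Y, U) ∈ Γ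

/-- Well-formedness of type environments. -/
inductive OkEnv : TpEnv → Prop
  | nil : OkEnv []
  | cons {Γ : TpEnv} {X : ℕ} {T : Tp} :
      OkEnv Γ → X ∉ envDom Γ → Closed T Γ → OkEnv ((X, T) :: Γ)

/-- The original algorithmic subtyping judgment `Γ ⊢ S <: T`. -/
inductive ASub : TpEnv → Tp → Tp → Prop
  | top (Γ : TpEnv) (S : Tp) : ASub Γ S .top
  | refl (Γ : TpEnv) (X : ℕ) : ASub Γ (.var X) (.var X)
  | trans {Γ : TpEnv} {X : ℕ} {U T : Tp} :
      (X, U) ∈ Γ → ASub Γ U T → ASub Γ (.var X) T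
  | arr {Γ : TpEnv} {S1 S2 T1 T2 : Tp} :
      ASub Γ T1 S1 → ASub Γ S2 T2 → ASub Γ (.arr S1 S2) (.arr T1 T2)
  | all {Γ : TpEnv} {X : ℕ} {S1 S2 T1 T2 : Tp} :
      ASub Γ T1 S1 → ASub ((X, T1) :: Γ) S2 T2 →
      ASub Γ (.all X S1 S2) (.all X T1 T2)

/-- The explicit (sequent-style) subtyping relation `sub(Γ, S, T)`. -/
inductive ESub : TpEnv → Tp → Tp → Prop
  | top {Γ : TpEnv} {S : Tp} : OkEnv Γ → Closed S Γ → ESub Γ S .top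
  | var {Γ : TpEnv} {X : ℕ} {U : Tp} :
      OkEnv Γ → (X, U) ∈ Γ → ESub Γ (.var X) (.var X)
  | trs {Γ : TpEnv} {X : ℕ} {U T : Tp} :
      (X, U) ∈ Γ → ESub Γ U T → ESub Γ (.var X) T
  | arr {Γ : TpEnv} {S1 S2 T1 T2 : Tp} :
      ESub Γ T1 S1 → ESub Γ S2 T2 → ESub Γ (.arr S1 S2) (.arr T1 T2)
  | all {Γ : TpEnv} {X : ℕ} {S1 S2 T1 T2 : Tp} :
      ESub Γ T1 S1 →
      (∀ Y : ℕ, OkEnv ((Y, T1) :: Γ) →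
        ESub ((Y, T1) :: Γ) (Tp.renVar X Y S2) (Tp.renVar X Y T2)) →
      ESub Γ (.all X S1 S2) (.all X T1 T2)

def Tp.size : Tp → ℕ
  | .var _ => 1
  | .top => 1
  | .arr s t => s.size + t.size + 1
  | .all _ s t => s.size + t.size + 1

theorem asub_weaken {Γ : TpEnv} {S T : Tp} (h : ASub Γ S T) :
    ∀ Γ' : TpEnv, (∀ p ∈ Γ, p ∈ Γ') → ASub Γ' S T := by
  induction h with
  | top => intro Γ' _; exact ASub.top Γ' _
  | refl => intro Γ' _; exact ASub.refl Γ' _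
  | trans hmem _ ih => intro Γ' hsub; exact ASub.trans (hsub _ hmem) (ih Γ' hsub)
  | arr _ _ ih1 ih2 => intro Γ' hsub; exact ASub.arr (ih1 Γ' hsub) (ih2 Γ' hsub)
  | all _ _ ih1 ih2 =>
      intro Γ' hsub
      refine ASub.all (ih1 Γ' hsub) (ih2 _ ?_)
      intro p hp
      rcases List.mem_cons.mp hp with h | h
      · exact h ▸ List.mem_cons_self
      · exact List.mem_cons_of_mem _ (hsub _ h)

theorem asub_narrow {Q P : Tp} {Γ : TpEnv} {X : ℕ}
    (hPQ : ASub Γ P Q)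
    (tr : ∀ (Γ' : TpEnv) (S T : Tp), ASub Γ' S Q → ASub Γ' Q T → ASub Γ' S T)
    {E : TpEnv} {M N : Tp} (h : ASub E M N) :
    ∀ Δ : TpEnv, E = Δ ++ (X, Q) :: Γ → ASub (Δ ++ (X, P) :: Γ) M N := by
  induction h with
  | top => intro Δ _; exact ASub.top _ _
  | refl => intro Δ _; exact ASub.refl _ _
  | trans hmem hUN ih =>
      intro Δ hE; subst hE
      rcases List.mem_append.mp hmem with h | h
      · exact ASub.trans (List.mem_append_left _ h) (ih Δ rfl)
      · rcases List.mem_cons.mp h with h | h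
        · obtain ⟨hX, hU⟩ := Prod.mk.injEq _ _ _ _ ▸ h
          subst hX; subst hU
          refine ASub.trans
            (List.mem_append_right _ List.mem_cons_self) ?_
          refine tr _ P _ (asub_weaken hPQ _ ?_) (ih Δ rfl)
          intro p hp
          exact List.mem_append_right _ (List.mem_cons_of_mem _ hp)
        · exact ASub.trans
            (List.mem_append_right _ (List.mem_cons_of_mem _ h)) (ih Δ rfl)
  | arr _ _ ih1 ih2 =>
      intro Δ hE; subst hE
      exact ASub.arr (ih1 Δ rfl) (ih2 Δ rfl)
  | all _ _ ih1 ih2 =>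
      intro Δ hE; subst hE
      exact ASub.all (ih1 Δ rfl) (ih2 (_ :: Δ) rfl)

theorem asub_trans_size : ∀ n : ℕ, ∀ Q : Tp, Q.size ≤ n →
    ∀ (Γ : TpEnv) (S T : Tp), ASub Γ S Q → ASub Γ Q T → ASub Γ S T := by
  intro n
  induction n with
  | zero => intro Q hQ; cases Q <;> simp [Tp.size] at hQ
  | succ n ihn =>
    intro Q hQ Γ S T h1
    revert hQ
    induction h1 generalizing T with
    | top Γ S =>
        intro _ h2
        cases h2
        exact ASub.top _ _
    | refl => intro _ h2; exact h2
    | trans hmem _ ih =>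
        intro hQ h2
        exact ASub.trans hmem (ih T hQ h2)
    | arr premA premB _ _ =>
        intro hQ h2
        simp only [Tp.size] at hQ
        cases h2 with
        | top => exact ASub.top _ _
        | arr hU1 hU2 =>
            exact ASub.arr (ihn _ (by omega) _ _ _ hU1 premA)
              (ihn _ (by omega) _ _ _ premB hU2)
    | all premA premB _ _ =>
        intro hQ h2
        simp only [Tp.size] at hQ
        cases h2 with
        | top => exact ASub.top _ _
        | all hU1 hU2 =>
            have narrowB := asub_narrow hU1
              (fun Γ' S T => ihn _ (by omega) Γ' S T) premB [] rfl
            exact ASub.all (ihn _ (by omega) _ _ _ hU1 premA)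
              (ihn _ (by omega) _ _ _ narrowB hU2)

theorem asub_transitivity (Γ : TpEnv) (S Q T : Tp)
    (h1 : ASub Γ S Q) (h2 : ASub Γ Q T) : ASub Γ S T :=
  asub_trans_size Q.size Q le_rfl Γ S T h1 h2
end

section
/- Narrowing for algorithmic subtyping in pure System F<:: for all type environments Γ, Δ, a variable X, and types P, Q, M, N, if Γ, X<:Q, Δ ⊢ M <: N and Γ ⊢ P <: Q are derivable in the algorithmic subtyping system, then Γ, X<:P, Δ ⊢ M <: N is derivable. -/
/-- ASub is monotone in the environment (membership-based weakening). -/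
lemma asub_mono {Γ Γ' : TpEnv} (hsub : ∀ p, p ∈ Γ → p ∈ Γ') {S T : Tp}
    (h : ASub Γ S T) : ASub Γ' S T := by
  induction h generalizing Γ' with
  | top => exact ASub.top _ _
  | refl => exact ASub.refl _ _
  | trans hmem _ ih => exact ASub.trans (hsub _ hmem) (ih hsub)
  | arr _ _ ih1 ih2 => exact ASub.arr (ih1 hsub) (ih2 hsub)
  | all _ _ ih1 ih2 =>
      refine ASub.all (ih1 hsub) (ih2 ?_)
      intro p hp
      rcases List.mem_cons.mp hp with h | h
      · exact List.mem_cons.mpr (Or.inl h)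
      · exact List.mem_cons.mpr (Or.inr (hsub _ h))

/-- Narrowing for a fixed cut type `Q`, assuming transitivity at `Q`. -/
lemma narrow_aux (Q : Tp)
    (htrans : ∀ Γ S T, ASub Γ S Q → ASub Γ Q T → ASub Γ S T)
    {E : TpEnv} {M N : Tp} (h : ASub E M N) :
    ∀ (Δ Γ : TpEnv) (X : ℕ) (P : Tp), E = Δ ++ (X, Q) :: Γ → ASub Γ P Q →
      ASub (Δ ++ (X, P) :: Γ) M N := by
  induction h with
  | top => intro Δ Γ X P hE h2; exact ASub.top _ _
  | refl => intro Δ Γ X P hE h2; exact ASub.refl _ _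
  | @trans _ Y U T hmem _ ih =>
      intro Δ Γ X P hE h2
      subst hE
      rcases List.mem_append.mp hmem with hΔ | hcons
      · exact ASub.trans (List.mem_append.mpr (Or.inl hΔ)) (ih Δ Γ X P rfl h2)
      · rcases List.mem_cons.mp hcons with heq | hΓ
        · have hY : Y = X := congrArg Prod.fst heq
          have hU : U = Q := congrArg Prod.snd heq
          have hPQ : ASub (Δ ++ (X, P) :: Γ) P Q :=
            asub_mono (fun p hp => List.mem_append.mpr
              (Or.inr (List.mem_cons.mpr (Or.inr hp)))) h2
          have hQT := ih Δ Γ X P rfl h2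
          rw [hU] at hQT
          rw [hY]
          exact ASub.trans
            (List.mem_append.mpr (Or.inr (List.mem_cons.mpr (Or.inl rfl))))
            (htrans _ _ _ hPQ hQT)
        · exact ASub.trans
            (List.mem_append.mpr (Or.inr (List.mem_cons.mpr (Or.inr hΓ))))
            (ih Δ Γ X P rfl h2)
  | arr _ _ ih1 ih2 =>
      intro Δ Γ X P hE h2
      exact ASub.arr (ih1 Δ Γ X P hE h2) (ih2 Δ Γ X P hE h2)
  | @all _ Y S1 S2 T1 T2 _ _ ih1 ih2 =>
      intro Δ Γ X P hE h2
      refine ASub.all (ih1 Δ Γ X P hE h2) ?_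
      exact ih2 ((Y, T1) :: Δ) Γ X P (by rw [hE]; rfl) h2

/-- Transitivity and narrowing, by structural induction on the cut type. -/
lemma trans_narrow (Q : Tp) :
    (∀ Γ S T, ASub Γ S Q → ASub Γ Q T → ASub Γ S T) ∧
    (∀ (Δ Γ : TpEnv) (X : ℕ) (P M N : Tp), ASub (Δ ++ (X, Q) :: Γ) M N →
      ASub Γ P Q → ASub (Δ ++ (X, P) :: Γ) M N) := by
  induction Q with
  | var x =>
      constructor
      · intro Γ S T h1 h2
        generalize hq : Tp.var x = q at h1
        induction h1 with
        | top => cases hq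
        | refl => exact hq ▸ h2
        | trans hmem _ ih => exact ASub.trans hmem (ih h2 hq)
        | arr => cases hq
        | all => cases hq
      · intro Δ Γ X P M N h1 h2
        refine narrow_aux _ ?_ h1 Δ Γ X P rfl h2
        intro Γ' S T hS hT
        generalize hq : Tp.var x = q at hS
        induction hS with
        | top => cases hq
        | refl => exact hq ▸ hT
        | trans hmem _ ih => exact ASub.trans hmem (ih hT hq)
        | arr => cases hq
        | all => cases hq
  | top =>
      constructor
      · intro Γ S T h1 h2
        cases h2
        exact ASub.top _ _
      · intro Δ Γ X P M N h1 h2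
        refine narrow_aux _ ?_ h1 Δ Γ X P rfl h2
        intro Γ' S T hS hT
        cases hT
        exact ASub.top _ _
  | arr Q1 Q2 ih1 ih2 =>
      have htrans : ∀ Γ S T, ASub Γ S (.arr Q1 Q2) → ASub Γ (.arr Q1 Q2) T →
          ASub Γ S T := by
        intro Γ S T h1 h2
        generalize hq : Tp.arr Q1 Q2 = q at h1
        induction h1 with
        | top => cases hq
        | refl => cases hq
        | trans hmem _ ih => exact ASub.trans hmem (ih h2 hq)
        | arr ha hb _ _ =>
            injection hq with e1 e2
            subst e1; subst e2
            cases h2 with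
            | top => exact ASub.top _ _
            | arr hc hd =>
                exact ASub.arr (ih1.1 _ _ _ hc ha) (ih2.1 _ _ _ hb hd)
        | all => cases hq
      exact ⟨htrans, fun Δ Γ X P M N h1 h2 =>
        narrow_aux _ htrans h1 Δ Γ X P rfl h2⟩
  | all Y Q1 Q2 ih1 ih2 =>
      have htrans : ∀ Γ S T, ASub Γ S (.all Y Q1 Q2) → ASub Γ (.all Y Q1 Q2) T →
          ASub Γ S T := by
        intro Γ S T h1 h2
        generalize hq : Tp.all Y Q1 Q2 = q at h1
        induction h1 with
        | top => cases hq
        | refl => cases hq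
        | trans hmem _ ih => exact ASub.trans hmem (ih h2 hq)
        | arr => cases hq
        | @all _ Z S1 S2 _ _ ha hb _ _ =>
            injection hq with e0 e1 e2
            subst e0; subst e1; subst e2
            cases h2 with
            | top => exact ASub.top _ _
            | all hc hd =>
                refine ASub.all (ih1.1 _ _ _ hc ha) ?_
                have hb' := ih1.2 [] _ _ _ _ _ hb hc
                exact ih2.1 _ _ _ hb' hd
      exact ⟨htrans, fun Δ Γ X P M N h1 h2 =>
        narrow_aux _ htrans h1 Δ Γ X P rfl h2⟩

theorem asub_narrowing (Γ Δ : TpEnv) (X : ℕ) (P Q M N : Tp)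
    (h1 : ASub (Δ ++ (X, Q) :: Γ) M N) (h2 : ASub Γ P Q) :
    ASub (Δ ++ (X, P) :: Γ) M N :=
  (trans_narrow Q).2 Δ Γ X P M N h1 h2
end

section
/- Permutation for explicit subtyping: for every type environment Γ, every permutation perm(Γ) of the bindings of Γ, and all types S, T, if sub(Γ, S, T) is derivable and ok(perm(Γ)) holds, then sub(perm(Γ), S, T) is derivable. -/
lemma envDom_perm {Γ Γ' : TpEnv} (h : Γ.Perm Γ') : envDom Γ = envDom Γ' := by
  ext x; simp [envDom, List.mem_map, h.mem_iff]

lemma closed_perm {Γ Γ' : TpEnv} {T : Tp} (h : Γ.Perm Γ') (hc : Closed T Γ) :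
    Closed T Γ' := fun Y hY => by
  obtain ⟨U, hU⟩ := hc Y hY; exact ⟨U, h.mem_iff.mp hU⟩

lemma esub_ok {Γ : TpEnv} {S T : Tp} (h : ESub Γ S T) : OkEnv Γ := by
  induction h with
  | top hok _ => exact hok
  | var hok _ => exact hok
  | trs _ _ ih => exact ih
  | arr _ _ ih _ => exact ih
  | all _ _ ih _ => exact ih

theorem esub_permutation (Γ Γ' : TpEnv) (S T : Tp) (hperm : Γ.Perm Γ')
    (h : ESub Γ S T) (hok : OkEnv Γ') : ESub Γ' S T := by
  induction h generalizing Γ' with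
  | top _ hc => exact .top hok (closed_perm hperm hc)
  | var _ hmem => exact .var hok (hperm.mem_iff.mp hmem)
  | trs hmem _ ih => exact .trs (hperm.mem_iff.mp hmem) (ih _ hperm hok)
  | arr _ _ ih1 ih2 => exact .arr (ih1 _ hperm hok) (ih2 _ hperm hok)
  | all h1 _ ih1 ih2 =>
    refine .all (ih1 _ hperm hok) (fun Y hokY => ?_)
    have hokΓ := esub_ok h1
    cases hokY with
    | cons hΓ' hdom hc =>
      have hokcons := OkEnv.cons hokΓ (by rw [envDom_perm hperm]; exact hdom)
          (closed_perm hperm.symm hc)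
      exact ih2 Y hokcons _ (hperm.cons _) (OkEnv.cons hΓ' hdom hc)
end

section
/- Weakening for explicit subtyping: for all type environments Γ, Δ and types S, T, if sub(Γ, S, T) is derivable and ok(Γ, Δ) holds (the concatenated environment is well formed), then sub((Γ, Δ), S, T) is derivable. -/
lemma esub_key (A : Finset ℕ) (σ : ℕ → ℕ) (x : ℕ) (x' : ℕ)
    (hx'bad : x' ∉ (A.erase x).image σ) :
    (A.image (Function.update σ x x')).erase x' = (A.erase x).image σ := by
  ext y
  simp only [Finset.mem_erase, Finset.mem_image]
  constructor
  · rintro ⟨hy, z, hz, rfl⟩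
    by_cases hzx : z = x
    · subst hzx; simp [Function.update] at hy
    · exact ⟨z, ⟨hzx, hz⟩, by simp [Function.update, hzx]⟩
  · rintro ⟨z, ⟨hzx, hzA⟩, rfl⟩
    refine ⟨?_, z, hzA, by simp [Function.update, hzx]⟩
    intro h
    exact hx'bad (h ▸ Finset.mem_image.mpr ⟨z, Finset.mem_erase.mpr ⟨hzx, hzA⟩, rfl⟩)

lemma esub_freshNotMem (B : Finset ℕ) : B.sup id + 1 ∉ B := by
  intro h
  have := Finset.le_sup (f := id) h
  simp only [id] at this
  omega

lemma Tp.fv_ren (t : Tp) : ∀ σ, (t.ren σ).fv = t.fv.image σ := by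
  induction t with
  | var x => intro σ; simp [Tp.ren, Tp.fv]
  | top => intro σ; simp [Tp.ren, Tp.fv]
  | arr s t ihs iht => intro σ; simp [Tp.ren, Tp.fv, ihs, iht, Finset.image_union]
  | all x s t ihs iht =>
    intro σ
    simp only [Tp.ren, Tp.fv, ihs, iht, Finset.image_union]
    congr 1
    apply esub_key
    split
    · exact esub_freshNotMem _
    · assumption

lemma Closed.mono {T : Tp} {Γ Γ' : TpEnv} (h : Closed T Γ)
    (hs : ∀ p ∈ Γ, p ∈ Γ') : Closed T Γ' := by
  intro Y hY
  obtain ⟨U, hU⟩ := h Y hY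
  exact ⟨U, hs _ hU⟩

lemma envDom_mono {Γ Γ' : TpEnv} (hs : ∀ p ∈ Γ, p ∈ Γ') :
    ∀ X, X ∈ envDom Γ → X ∈ envDom Γ' := by
  intro X hX
  simp only [envDom, List.mem_toFinset, List.mem_map] at hX ⊢
  obtain ⟨p, hp, rfl⟩ := hX
  exact ⟨p, hs _ hp, rfl⟩

lemma esub_regular {Γ : TpEnv} {S T : Tp} (h : ESub Γ S T) :
    OkEnv Γ ∧ Closed S Γ ∧ Closed T Γ := by
  induction h with
  | top hok hc => exact ⟨hok, hc, by intro Y hY; simp [Tp.fv] at hY⟩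
  | var hok hmem =>
    refine ⟨hok, ?_, ?_⟩ <;>
      · intro Y hY; simp [Tp.fv] at hY; subst hY; exact ⟨_, hmem⟩
  | trs hmem _ ih =>
    refine ⟨ih.1, ?_, ih.2.2⟩
    intro Y hY; simp [Tp.fv] at hY; subst hY; exact ⟨_, hmem⟩
  | arr _ _ ih1 ih2 =>
    refine ⟨ih1.1, ?_, ?_⟩ <;>
      · intro Y hY
        simp only [Tp.fv, Finset.mem_union] at hY
        rcases hY with hY | hY
        · first
            | exact ih1.2.1 Y hY | exact ih1.2.2 Y hY
            | exact ih2.2.1 Y hY | exact ih2.2.2 Y hY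
        · first
            | exact ih1.2.1 Y hY | exact ih1.2.2 Y hY
            | exact ih2.2.1 Y hY | exact ih2.2.2 Y hY
  | @all Γ X S1 S2 T1 T2 h1 h2 ih1 ih2 =>
    obtain ⟨hok, hT1, hS1⟩ := ih1
    set Y : ℕ := (envDom Γ ∪ S2.fv ∪ T2.fv).sup id + 1 with hYdef
    have hYfresh : Y ∉ envDom Γ ∪ S2.fv ∪ T2.fv := esub_freshNotMem _
    simp only [Finset.mem_union, not_or] at hYfresh
    obtain ⟨⟨hYΓ, hYS2⟩, hYT2⟩ := hYfresh
    have hokY : OkEnv ((Y, T1) :: Γ) := .cons hok hYΓ hT1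
    obtain ⟨_, hcS2, hcT2⟩ := ih2 Y hokY
    have key : ∀ (A : Tp), Closed (Tp.renVar X Y A) ((Y, T1) :: Γ) → Y ∉ A.fv →
        ∀ Z ∈ A.fv.erase X, ∃ U, (Z, U) ∈ Γ := by
      intro A hcl hYA Z hZ
      obtain ⟨hZX, hZA⟩ := Finset.mem_erase.mp hZ
      have hZren : Z ∈ (Tp.renVar X Y A).fv := by
        rw [Tp.renVar, Tp.fv_ren]
        exact Finset.mem_image.mpr ⟨Z, hZA, by simp [Function.update, hZX]⟩
      obtain ⟨U, hU⟩ := hcl Z hZren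
      rcases List.mem_cons.mp hU with hU | hU
      · exfalso
        have : Z = Y := (Prod.mk.injEq _ _ _ _ ▸ hU).1
        exact hYA (this ▸ hZA)
      · exact ⟨U, hU⟩
    refine ⟨hok, ?_, ?_⟩
    · intro Z hZ
      simp only [Tp.fv, Finset.mem_union] at hZ
      rcases hZ with hZ | hZ
      · exact hS1 Z hZ
      · exact key S2 hcS2 hYS2 Z hZ
    · intro Z hZ
      simp only [Tp.fv, Finset.mem_union] at hZ
      rcases hZ with hZ | hZ
      · exact hT1 Z hZ
      · exact key T2 hcT2 hYT2 Z hZ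

lemma esub_mono {Γ : TpEnv} {S T : Tp} (h : ESub Γ S T) :
    ∀ Γ' : TpEnv, OkEnv Γ' → (∀ p ∈ Γ, p ∈ Γ') → ESub Γ' S T := by
  induction h with
  | top hok hc => intro Γ' hok' hs; exact .top hok' (hc.mono hs)
  | var hok hmem => intro Γ' hok' hs; exact .var hok' (hs _ hmem)
  | trs hmem _ ih => intro Γ' hok' hs; exact .trs (hs _ hmem) (ih Γ' hok' hs)
  | arr _ _ ih1 ih2 =>
    intro Γ' hok' hs; exact .arr (ih1 Γ' hok' hs) (ih2 Γ' hok' hs)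
  | @all Γ X S1 S2 T1 T2 h1 h2 ih1 ih2 =>
    intro Γ' hok' hs
    refine .all (ih1 Γ' hok' hs) ?_
    intro Y hokY'
    obtain ⟨hok, hT1, _⟩ := esub_regular h1
    cases hokY' with
    | cons hok'' hYΓ' hcT1' =>
      have hYΓ : Y ∉ envDom Γ := fun hmem => hYΓ' (envDom_mono hs Y hmem)
      have hokY : OkEnv ((Y, T1) :: Γ) := .cons hok hYΓ hT1
      refine ih2 Y hokY ((Y, T1) :: Γ') (.cons hok' hYΓ' hcT1') ?_
      intro p hp
      rcases List.mem_cons.mp hp with hp | hp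
      · exact hp ▸ List.mem_cons_self
      · exact List.mem_cons_of_mem _ (hs _ hp)

theorem esub_weakening (Γ Δ : TpEnv) (S T : Tp)
    (h : ESub Γ S T) (hok : OkEnv (Δ ++ Γ)) : ESub (Δ ++ Γ) S T :=
  esub_mono h (Δ ++ Γ) hok (fun _ hp => List.mem_append.mpr (Or.inr hp))
end
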